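/- arXiv:1806.07544 — 12 statements merged into one kernel-verified Lean document; each statement's English description precedes it below -/
import Mathlib

section
/- If (w₁, w₂, w₃) are differentiable complex-valued functions on an open set satisfying the Darboux–Halphen system w₁' = w₂w₃ − w₁w₂ − w₁w₃, w₂' = w₃w₁ − w₂w₃ − w₂w₁, w₃' = w₁w₂ − w₃w₁ − w₃w₂, then y = −2(w₁ + w₂ + w₃) satisfies Chazy's equation y''' − 2yy'' + 3(y')² = 0. -/
/-!
The elementary symmetric functions `σ₁ = w₁ + w₂ + w₃`, `σ₂ = w₁w₂ + w₂w₃ + w₃w₁`,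
`σ₃ = w₁w₂w₃` of a solution of the Darboux–Halphen system satisfy the closed system
`σ₁' = -σ₂`, `σ₂' = -6σ₃`, `σ₃' = σ₂² - 4σ₁σ₃`. Hence `y = -2σ₁` has `y' = 2σ₂`,
`y'' = -12σ₃` and `y''' = -12(σ₂² - 4σ₁σ₃)`, and the Chazy expression vanishes identically.
-/

open Set

variable {𝕜 : Type*} [NontriviallyNormedField 𝕜]

theorem IsOpen.hasDerivAt_deriv {F : Type*} [NormedAddCommGroup F] [NormedSpace 𝕜 F]
    {s : Set 𝕜} (hs : IsOpen s) {f g : 𝕜 → F} (hf : ∀ x ∈ s, HasDerivAt f (g x) x)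
    {x : 𝕜} (hx : x ∈ s) {g' : F} (hg : HasDerivAt g g' x) :
    HasDerivAt (deriv f) g' x :=
  hg.congr_of_eventuallyEq <|
    EqOn.eventuallyEq_of_mem (fun z hz => (hf z hz).deriv) (hs.mem_nhds hx)

def DarbouxHalphenAt (w₁ w₂ w₃ : 𝕜 → 𝕜) (x : 𝕜) : Prop :=
  HasDerivAt w₁ (w₂ x * w₃ x - w₁ x * w₂ x - w₁ x * w₃ x) x ∧
  HasDerivAt w₂ (w₃ x * w₁ x - w₂ x * w₃ x - w₂ x * w₁ x) x ∧
  HasDerivAt w₃ (w₁ x * w₂ x - w₃ x * w₁ x - w₃ x * w₂ x) x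

namespace DarbouxHalphenAt

variable {w₁ w₂ w₃ : 𝕜 → 𝕜} {x : 𝕜}

theorem hasDerivAt_add (h : DarbouxHalphenAt w₁ w₂ w₃ x) :
    HasDerivAt (fun x => w₁ x + w₂ x + w₃ x)
      (-(w₁ x * w₂ x + w₂ x * w₃ x + w₃ x * w₁ x)) x := by
  obtain ⟨h₁, h₂, h₃⟩ := h
  exact ((h₁.add h₂).add h₃).congr_deriv (by ring)

theorem hasDerivAt_add_mul (h : DarbouxHalphenAt w₁ w₂ w₃ x) :
    HasDerivAt (fun x => w₁ x * w₂ x + w₂ x * w₃ x + w₃ x * w₁ x)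
      (-6 * (w₁ x * w₂ x * w₃ x)) x := by
  obtain ⟨h₁, h₂, h₃⟩ := h
  exact (((h₁.mul h₂).add (h₂.mul h₃)).add (h₃.mul h₁)).congr_deriv (by ring)

theorem hasDerivAt_mul (h : DarbouxHalphenAt w₁ w₂ w₃ x) :
    HasDerivAt (fun x => w₁ x * w₂ x * w₃ x)
      ((w₁ x * w₂ x + w₂ x * w₃ x + w₃ x * w₁ x) ^ 2
        - 4 * (w₁ x + w₂ x + w₃ x) * (w₁ x * w₂ x * w₃ x)) x := by
  obtain ⟨h₁, h₂, h₃⟩ := h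
  exact ((h₁.mul h₂).mul h₃).congr_deriv (by simp only [Pi.mul_apply]; ring)

end DarbouxHalphenAt

/-- If `(w₁, w₂, w₃)` satisfy the Darboux–Halphen system on an open set,
then `y = -2(w₁ + w₂ + w₃)` satisfies Chazy's equation `y''' - 2 y y'' + 3 (y')² = 0`. -/
theorem chazy_of_darboux_halphen (s : Set ℂ) (hs : IsOpen s)
    (w₁ w₂ w₃ y : ℂ → ℂ)
    (h₁ : ∀ x ∈ s, HasDerivAt w₁ (w₂ x * w₃ x - w₁ x * w₂ x - w₁ x * w₃ x) x)
    (h₂ : ∀ x ∈ s, HasDerivAt w₂ (w₃ x * w₁ x - w₂ x * w₃ x - w₂ x * w₁ x) x)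
    (h₃ : ∀ x ∈ s, HasDerivAt w₃ (w₁ x * w₂ x - w₃ x * w₁ x - w₃ x * w₂ x) x)
    (hy : ∀ x, y x = -2 * (w₁ x + w₂ x + w₃ x)) :
    ∀ x ∈ s,
      deriv (deriv (deriv y)) x - 2 * y x * deriv (deriv y) x + 3 * (deriv y x) ^ 2 = 0 := by
  have hDH : ∀ x ∈ s, DarbouxHalphenAt w₁ w₂ w₃ x := fun x hx => ⟨h₁ x hx, h₂ x hx, h₃ x hx⟩
  obtain rfl : y = fun x => -2 * (w₁ x + w₂ x + w₃ x) := funext hy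
  have hy₁ : ∀ x ∈ s, HasDerivAt (fun x => -2 * (w₁ x + w₂ x + w₃ x))
      (2 * (w₁ x * w₂ x + w₂ x * w₃ x + w₃ x * w₁ x)) x := fun x hx =>
    ((hDH x hx).hasDerivAt_add.const_mul (-2 : ℂ)).congr_deriv (by ring)
  have hy₂ : ∀ x ∈ s, HasDerivAt (deriv fun x => -2 * (w₁ x + w₂ x + w₃ x))
      (-12 * (w₁ x * w₂ x * w₃ x)) x := fun x hx =>
    hs.hasDerivAt_deriv hy₁ hx <|
      ((hDH x hx).hasDerivAt_add_mul.const_mul (2 : ℂ)).congr_deriv (by ring)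
  have hy₃ : ∀ x ∈ s, HasDerivAt (deriv (deriv fun x => -2 * (w₁ x + w₂ x + w₃ x)))
      (-12 * ((w₁ x * w₂ x + w₂ x * w₃ x + w₃ x * w₁ x) ^ 2
        - 4 * (w₁ x + w₂ x + w₃ x) * (w₁ x * w₂ x * w₃ x))) x := fun x hx =>
    hs.hasDerivAt_deriv hy₂ hx ((hDH x hx).hasDerivAt_mul.const_mul (-12 : ℂ))
  intro x hx
  rw [(hy₃ x hx).deriv, (hy₂ x hx).deriv, (hy₁ x hx).deriv]
  ring
end

section
/- If (w₁, w₂, w₃) satisfy the Darboux–Halphen system, then y = −4w₁ − w₂ − w₃ satisfies Chazy's equation y''' − 2yy'' + 3(y')² = 0 (and likewise for the cyclic permutations −w₁ − 4w₂ − w₃ and −w₁ − w₂ − 4w₃). -/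
open Complex

/-!
With `a = w₁`, `u = w₂ + w₃` and `v = w₂ w₃`, the Darboux–Halphen system closes up into
`a' = v - a u`, `u' = -2 v`, `v' = a (u² - 4 v) - u v`. For `y = -4 a - u` this gives
`y' = 4 a u - 2 v`, `y'' = 6 u (v - a u)` and `y''' = 12 (a u³ - u² v - v²)`, and Chazy's
expression in these polynomials vanishes identically. The system is invariant under cyclic
permutation of `(w₁, w₂, w₃)`, which gives the other two combinations.
-/

structure IsDarbouxHalphenOn (s : Set ℂ) (w₁ w₂ w₃ : ℂ → ℂ) : Prop where
  hasDerivAt₁ : ∀ x ∈ s, HasDerivAt w₁ (w₂ x * w₃ x - w₁ x * w₂ x - w₁ x * w₃ x) x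
  hasDerivAt₂ : ∀ x ∈ s, HasDerivAt w₂ (w₃ x * w₁ x - w₂ x * w₃ x - w₂ x * w₁ x) x
  hasDerivAt₃ : ∀ x ∈ s, HasDerivAt w₃ (w₁ x * w₂ x - w₃ x * w₁ x - w₃ x * w₂ x) x

noncomputable def chazyOperator (y : ℂ → ℂ) (x : ℂ) : ℂ :=
  deriv (deriv (deriv y)) x - 2 * y x * deriv (deriv y) x + 3 * deriv y x ^ 2

theorem chazyOperator_neg_four_mul_sub_eq_zero {s : Set ℂ} (hs : IsOpen s) {a u v : ℂ → ℂ}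
    (ha : ∀ x ∈ s, HasDerivAt a (v x - a x * u x) x)
    (hu : ∀ x ∈ s, HasDerivAt u (-2 * v x) x)
    (hv : ∀ x ∈ s, HasDerivAt v (a x * (u x ^ 2 - 4 * v x) - u x * v x) x)
    {x : ℂ} (hx : x ∈ s) :
    chazyOperator (fun x => -4 * a x - u x) x = 0 := by
  have d₁ : s.EqOn (deriv fun x => -4 * a x - u x) (fun x => 4 * a x * u x - 2 * v x) :=
    fun x hx => ((((ha x hx).const_mul (-4)).sub (hu x hx)).congr_deriv (by ring)).deriv
  have d₂ : s.EqOn (deriv (deriv fun x => -4 * a x - u x))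
      (fun x => 6 * u x * (v x - a x * u x)) := fun x hx =>
    (d₁.deriv hs hx).trans <| ((((ha x hx).const_mul 4).mul (hu x hx)).sub
      ((hv x hx).const_mul 2)).congr_deriv (by ring) |>.deriv
  have d₃ : deriv (deriv (deriv fun x => -4 * a x - u x)) x
      = 12 * (a x * u x ^ 3 - u x ^ 2 * v x - v x ^ 2) :=
    (d₂.deriv hs hx).trans <| (((hu x hx).const_mul 6).mul
      ((hv x hx).fun_sub ((ha x hx).fun_mul (hu x hx)))).congr_deriv (by ring) |>.deriv
  rw [chazyOperator, d₃, d₂ hx, d₁ hx]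
  ring

namespace IsDarbouxHalphenOn

variable {s : Set ℂ} {w₁ w₂ w₃ : ℂ → ℂ}

theorem rotate (h : IsDarbouxHalphenOn s w₁ w₂ w₃) : IsDarbouxHalphenOn s w₂ w₃ w₁ :=
  ⟨h.hasDerivAt₂, h.hasDerivAt₃, h.hasDerivAt₁⟩

theorem hasDerivAt_add (h : IsDarbouxHalphenOn s w₁ w₂ w₃) {x : ℂ} (hx : x ∈ s) :
    HasDerivAt (fun x => w₂ x + w₃ x) (-2 * (w₂ x * w₃ x)) x :=
  ((h.hasDerivAt₂ x hx).add (h.hasDerivAt₃ x hx)).congr_deriv (by ring)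

theorem hasDerivAt_mul (h : IsDarbouxHalphenOn s w₁ w₂ w₃) {x : ℂ} (hx : x ∈ s) :
    HasDerivAt (fun x => w₂ x * w₃ x)
      (w₁ x * ((w₂ x + w₃ x) ^ 2 - 4 * (w₂ x * w₃ x)) - (w₂ x + w₃ x) * (w₂ x * w₃ x)) x :=
  ((h.hasDerivAt₂ x hx).mul (h.hasDerivAt₃ x hx)).congr_deriv (by ring)

theorem chazyOperator_eq_zero (h : IsDarbouxHalphenOn s w₁ w₂ w₃) (hs : IsOpen s)
    {y : ℂ → ℂ} (hy : ∀ x, y x = -4 * w₁ x - w₂ x - w₃ x) {x : ℂ} (hx : x ∈ s) :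
    chazyOperator y x = 0 := by
  have hy' : y = fun x => -4 * w₁ x - (w₂ x + w₃ x) := funext fun x => by rw [hy]; ring
  subst hy'
  exact chazyOperator_neg_four_mul_sub_eq_zero hs
    (fun x hx => (h.hasDerivAt₁ x hx).congr_deriv (by ring))
    (fun x hx => h.hasDerivAt_add hx) (fun x hx => h.hasDerivAt_mul hx) hx

end IsDarbouxHalphenOn

/-- If `(w₁, w₂, w₃)` satisfy the Darboux–Halphen system, then
`y = -4w₁ - w₂ - w₃` satisfies Chazy's equation, and likewise for the cyclic
permutations `-w₁ - 4w₂ - w₃` and `-w₁ - w₂ - 4w₃`. -/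
theorem chazy_of_darboux_halphen_combinations (s : Set ℂ) (hs : IsOpen s)
    (w₁ w₂ w₃ y₁ y₂ y₃ : ℂ → ℂ)
    (h₁ : ∀ x ∈ s, HasDerivAt w₁ (w₂ x * w₃ x - w₁ x * w₂ x - w₁ x * w₃ x) x)
    (h₂ : ∀ x ∈ s, HasDerivAt w₂ (w₃ x * w₁ x - w₂ x * w₃ x - w₂ x * w₁ x) x)
    (h₃ : ∀ x ∈ s, HasDerivAt w₃ (w₁ x * w₂ x - w₃ x * w₁ x - w₃ x * w₂ x) x)
    (hy₁ : ∀ x, y₁ x = -4 * w₁ x - w₂ x - w₃ x)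
    (hy₂ : ∀ x, y₂ x = -w₁ x - 4 * w₂ x - w₃ x)
    (hy₃ : ∀ x, y₃ x = -w₁ x - w₂ x - 4 * w₃ x) :
    ∀ x ∈ s,
      (deriv (deriv (deriv y₁)) x - 2 * y₁ x * deriv (deriv y₁) x + 3 * (deriv y₁ x) ^ 2 = 0) ∧
      (deriv (deriv (deriv y₂)) x - 2 * y₂ x * deriv (deriv y₂) x + 3 * (deriv y₂ x) ^ 2 = 0) ∧
      (deriv (deriv (deriv y₃)) x - 2 * y₃ x * deriv (deriv y₃) x + 3 * (deriv y₃ x) ^ 2 = 0) := by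
  intro x hx
  have h : IsDarbouxHalphenOn s w₁ w₂ w₃ := ⟨h₁, h₂, h₃⟩
  exact ⟨h.chazyOperator_eq_zero hs hy₁ hx,
    h.rotate.chazyOperator_eq_zero hs (fun x => by rw [hy₂]; ring) hx,
    h.rotate.rotate.chazyOperator_eq_zero hs (fun x => by rw [hy₃]; ring) hx⟩
end

section
/- If (p₁, p₂, p₃) are differentiable functions satisfying the system pᵢ' − (1/6)pᵢ² = (8/27)(p_{i+1} − pᵢ)(pᵢ − p_{i+2}) − (1/54)(p_{i+1} − p_{i+2})² (indices mod 3), then the triples (wⱼ) defined by inverting p₁ = −4w₁ − w₂ − w₃, p₂ = −w₁ − 4w₂ − w₃, p₃ = −w₁ − w₂ − 4w₃ satisfy the Darboux–Halphen system. -/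
/-!
Writing `S = w₁ + w₂ + w₃`, the linear change of variables reads `pᵢ = -3wᵢ - S`; summing gives
`S = -(p₁ + p₂ + p₃)/6`, hence `wᵢ = (-5pᵢ + p_{i+1} + p_{i+2})/18`. Differentiating this inverse
formula and substituting the `p`-system turns `wᵢ'` into a quadratic polynomial in the `w`'s, which is
identically the Darboux–Halphen right-hand side. Everything is cyclically symmetric, so one index suffices.
-/

namespace DarbouxHalphen

section Algebra

variable {K : Type*} [Field K]

def pOfW (a b c : K) : K := -4 * a - b - c

def pInv (a b c : K) : K := (-5 * a + b + c) / 18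

def pSystemField (a b c : K) : K :=
  1/6 * a ^ 2 + 8/27 * (b - a) * (a - c) - 1/54 * (b - c) ^ 2

def halphenField (a b c : K) : K := b * c - a * b - a * c

variable [CharZero K] (a b c : K)

theorem pInv_pOfW : pInv (pOfW a b c) (pOfW b c a) (pOfW c a b) = a := by
  unfold pInv pOfW; ring

theorem pInv_pSystemField_pOfW :
    pInv (pSystemField (pOfW a b c) (pOfW b c a) (pOfW c a b))
      (pSystemField (pOfW b c a) (pOfW c a b) (pOfW a b c))
      (pSystemField (pOfW c a b) (pOfW a b c) (pOfW b c a)) = halphenField a b c := by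
  unfold pInv pSystemField pOfW halphenField; ring

end Algebra

section Calculus

variable {𝕜 : Type*} [NontriviallyNormedField 𝕜]

theorem _root_.HasDerivAt.pInv {f₁ f₂ f₃ : 𝕜 → 𝕜} {a b c x : 𝕜} (h₁ : HasDerivAt f₁ a x)
    (h₂ : HasDerivAt f₂ b x) (h₃ : HasDerivAt f₃ c x) :
    HasDerivAt (fun y => pInv (f₁ y) (f₂ y) (f₃ y)) (pInv a b c) x :=
  (((h₁.const_mul (-5)).add h₂).add h₃).div_const 18

variable [CharZero 𝕜]

theorem hasDerivAt_halphenField_of_pSystem {p₁ p₂ p₃ w₁ w₂ w₃ : 𝕜 → 𝕜} {x : 𝕜}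
    (hp₁ : ∀ y, p₁ y = pOfW (w₁ y) (w₂ y) (w₃ y))
    (hp₂ : ∀ y, p₂ y = pOfW (w₂ y) (w₃ y) (w₁ y))
    (hp₃ : ∀ y, p₃ y = pOfW (w₃ y) (w₁ y) (w₂ y))
    (h₁ : HasDerivAt p₁ (pSystemField (p₁ x) (p₂ x) (p₃ x)) x)
    (h₂ : HasDerivAt p₂ (pSystemField (p₂ x) (p₃ x) (p₁ x)) x)
    (h₃ : HasDerivAt p₃ (pSystemField (p₃ x) (p₁ x) (p₂ x)) x) :
    HasDerivAt w₁ (halphenField (w₁ x) (w₂ x) (w₃ x)) x := by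
  have hw₁ : w₁ = fun y => pInv (p₁ y) (p₂ y) (p₃ y) := by
    funext y; rw [hp₁, hp₂, hp₃, pInv_pOfW]
  have hderiv := h₁.pInv h₂ h₃
  rwa [hp₁, hp₂, hp₃, pInv_pSystemField_pOfW, ← hw₁] at hderiv

end Calculus

end DarbouxHalphen

open DarbouxHalphen in
theorem darboux_halphen_of_p_system_general (s : Set ℂ)
    (p₁ p₂ p₃ w₁ w₂ w₃ : ℂ → ℂ)
    (h₁ : ∀ x ∈ s, HasDerivAt p₁
      ((1/6) * (p₁ x)^2 + (8/27) * (p₂ x - p₁ x) * (p₁ x - p₃ x)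
        - (1/54) * (p₂ x - p₃ x)^2) x)
    (h₂ : ∀ x ∈ s, HasDerivAt p₂
      ((1/6) * (p₂ x)^2 + (8/27) * (p₃ x - p₂ x) * (p₂ x - p₁ x)
        - (1/54) * (p₃ x - p₁ x)^2) x)
    (h₃ : ∀ x ∈ s, HasDerivAt p₃
      ((1/6) * (p₃ x)^2 + (8/27) * (p₁ x - p₃ x) * (p₃ x - p₂ x)
        - (1/54) * (p₁ x - p₂ x)^2) x)
    (hw₁ : ∀ x, p₁ x = -4 * w₁ x - w₂ x - w₃ x)
    (hw₂ : ∀ x, p₂ x = -w₁ x - 4 * w₂ x - w₃ x)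
    (hw₃ : ∀ x, p₃ x = -w₁ x - w₂ x - 4 * w₃ x) :
    ∀ x ∈ s,
      HasDerivAt w₁ (w₂ x * w₃ x - w₁ x * w₂ x - w₁ x * w₃ x) x ∧
      HasDerivAt w₂ (w₃ x * w₁ x - w₂ x * w₃ x - w₂ x * w₁ x) x ∧
      HasDerivAt w₃ (w₁ x * w₂ x - w₃ x * w₁ x - w₃ x * w₂ x) x := by
  have hp₁ : ∀ y, p₁ y = pOfW (w₁ y) (w₂ y) (w₃ y) := hw₁
  have hp₂ : ∀ y, p₂ y = pOfW (w₂ y) (w₃ y) (w₁ y) := fun y => by rw [hw₂, pOfW]; ring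
  have hp₃ : ∀ y, p₃ y = pOfW (w₃ y) (w₁ y) (w₂ y) := fun y => by rw [hw₃, pOfW]; ring
  intro x hx
  exact ⟨hasDerivAt_halphenField_of_pSystem hp₁ hp₂ hp₃ (h₁ x hx) (h₂ x hx) (h₃ x hx),
    hasDerivAt_halphenField_of_pSystem hp₂ hp₃ hp₁ (h₂ x hx) (h₃ x hx) (h₁ x hx),
    hasDerivAt_halphenField_of_pSystem hp₃ hp₁ hp₂ (h₃ x hx) (h₁ x hx) (h₂ x hx)⟩

/-- If `(p₁, p₂, p₃)` satisfy the first-order system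
`pᵢ' - (1/6)pᵢ² = (8/27)(p_{i+1} - pᵢ)(pᵢ - p_{i+2}) - (1/54)(p_{i+1} - p_{i+2})²`,
then the functions `(w₁, w₂, w₃)` obtained by inverting the linear map
`p₁ = -4w₁ - w₂ - w₃`, `p₂ = -w₁ - 4w₂ - w₃`, `p₃ = -w₁ - w₂ - 4w₃`
satisfy the Darboux–Halphen system. -/
theorem darboux_halphen_of_p_system (s : Set ℂ) (hs : IsOpen s)
    (p₁ p₂ p₃ w₁ w₂ w₃ : ℂ → ℂ)
    (h₁ : ∀ x ∈ s, HasDerivAt p₁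
      ((1/6) * (p₁ x)^2 + (8/27) * (p₂ x - p₁ x) * (p₁ x - p₃ x)
        - (1/54) * (p₂ x - p₃ x)^2) x)
    (h₂ : ∀ x ∈ s, HasDerivAt p₂
      ((1/6) * (p₂ x)^2 + (8/27) * (p₃ x - p₂ x) * (p₂ x - p₁ x)
        - (1/54) * (p₃ x - p₁ x)^2) x)
    (h₃ : ∀ x ∈ s, HasDerivAt p₃
      ((1/6) * (p₃ x)^2 + (8/27) * (p₁ x - p₃ x) * (p₃ x - p₂ x)
        - (1/54) * (p₁ x - p₂ x)^2) x)
    (hw₁ : ∀ x, p₁ x = -4 * w₁ x - w₂ x - w₃ x)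
    (hw₂ : ∀ x, p₂ x = -w₁ x - 4 * w₂ x - w₃ x)
    (hw₃ : ∀ x, p₃ x = -w₁ x - w₂ x - 4 * w₃ x) :
    ∀ x ∈ s,
      HasDerivAt w₁ (w₂ x * w₃ x - w₁ x * w₂ x - w₁ x * w₃ x) x ∧
      HasDerivAt w₂ (w₃ x * w₁ x - w₂ x * w₃ x - w₂ x * w₁ x) x ∧
      HasDerivAt w₃ (w₁ x * w₂ x - w₃ x * w₁ x - w₃ x * w₂ x) x :=
  darboux_halphen_of_p_system_general s p₁ p₂ p₃ w₁ w₂ w₃ h₁ h₂ h₃ hw₁ hw₂ hw₃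
end

section
/- Suppose (p₁, p₂, p₃) satisfy p₁' − (1/6)p₁² = (8/27)(p₂−p₁)(p₁−p₃) − (1/54)(p₂−p₃)² together with its two cyclic permutations. Define q₁ = (16/9)(p₂−p₁)(p₃−p₁) + (1/9)(p₂−p₃)² and r₁ = (1/27)(2p₁−p₂−p₃)(32(p₃−p₁)(p₂−p₁) − (p₂−p₃)²). Then (p₁, q₁, r₁) satisfies Ramanujan's differential equations: p₁' = (1/6)(p₁² − q₁), q₁' = (2/3)(p₁q₁ − r₁), r₁' = p₁r₁ − q₁². -/
/-! Since `q₁` and `r₁` are polynomials in `p₁, p₂, p₃`, the chain rule together with the cyclic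
system expresses `q₁'` and `r₁'` as polynomials in the `pᵢ`, and each of Ramanujan's three
equations becomes a polynomial identity. -/

/-- Right-hand side of the cyclic system: `p₁' = cyclicRHS p₁ p₂ p₃`, `p₂' = cyclicRHS p₂ p₃ p₁`,
`p₃' = cyclicRHS p₃ p₁ p₂`. -/
def cyclicRHS {K : Type*} [Field K] (a b c : K) : K :=
  (1/6) * a^2 + (8/27) * (b - a) * (a - c) - (1/54) * (b - c)^2

def ramanujanQ {K : Type*} [Field K] (a b c : K) : K :=
  (16/9) * (b - a) * (c - a) + (1/9) * (b - c)^2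

def ramanujanR {K : Type*} [Field K] (a b c : K) : K :=
  (1/27) * (2 * a - b - c) * (32 * (c - a) * (b - a) - (b - c)^2)

theorem cyclicRHS_eq {K : Type*} [Field K] [CharZero K] (a b c : K) :
    cyclicRHS a b c = (1/6) * (a^2 - ramanujanQ a b c) := by
  unfold cyclicRHS ramanujanQ
  ring

section Derivatives

variable {𝕜 : Type*} [NontriviallyNormedField 𝕜] [CharZero 𝕜] {a b c : 𝕜 → 𝕜} {x : 𝕜}

theorem hasDerivAt_ramanujanQ (ha : HasDerivAt a (cyclicRHS (a x) (b x) (c x)) x)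
    (hb : HasDerivAt b (cyclicRHS (b x) (c x) (a x)) x)
    (hc : HasDerivAt c (cyclicRHS (c x) (a x) (b x)) x) :
    HasDerivAt (fun y => ramanujanQ (a y) (b y) (c y))
      ((2/3) * (a x * ramanujanQ (a x) (b x) (c x) - ramanujanR (a x) (b x) (c x))) x := by
  have h := (((hb.sub ha).const_mul (16/9 : 𝕜)).mul (hc.sub ha)).add
    (((hb.sub hc).pow 2).const_mul (1/9 : 𝕜))
  refine h.congr_deriv ?_
  simp only [cyclicRHS, ramanujanQ, ramanujanR, Pi.sub_apply]
  ring

theorem hasDerivAt_ramanujanR (ha : HasDerivAt a (cyclicRHS (a x) (b x) (c x)) x)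
    (hb : HasDerivAt b (cyclicRHS (b x) (c x) (a x)) x)
    (hc : HasDerivAt c (cyclicRHS (c x) (a x) (b x)) x) :
    HasDerivAt (fun y => ramanujanR (a y) (b y) (c y))
      (a x * ramanujanR (a x) (b x) (c x) - ramanujanQ (a x) (b x) (c x)^2) x := by
  have h := ((((ha.const_mul (2 : 𝕜)).sub hb).sub hc).const_mul (1/27 : 𝕜)).mul
    ((((hc.sub ha).const_mul (32 : 𝕜)).mul (hb.sub ha)).sub ((hb.sub hc).pow 2))
  refine h.congr_deriv ?_
  simp only [cyclicRHS, ramanujanQ, ramanujanR, Pi.sub_apply, Pi.mul_apply, Pi.pow_apply]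
  ring

end Derivatives

theorem ramanujan_of_p_system_general (s : Set ℂ)
    (p₁ p₂ p₃ q₁ r₁ : ℂ → ℂ)
    (h₁ : ∀ x ∈ s, HasDerivAt p₁
      ((1/6) * (p₁ x)^2 + (8/27) * (p₂ x - p₁ x) * (p₁ x - p₃ x)
        - (1/54) * (p₂ x - p₃ x)^2) x)
    (h₂ : ∀ x ∈ s, HasDerivAt p₂
      ((1/6) * (p₂ x)^2 + (8/27) * (p₃ x - p₂ x) * (p₂ x - p₁ x)
        - (1/54) * (p₃ x - p₁ x)^2) x)
    (h₃ : ∀ x ∈ s, HasDerivAt p₃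
      ((1/6) * (p₃ x)^2 + (8/27) * (p₁ x - p₃ x) * (p₃ x - p₂ x)
        - (1/54) * (p₁ x - p₂ x)^2) x)
    (hq₁ : ∀ x, q₁ x = (16/9) * (p₂ x - p₁ x) * (p₃ x - p₁ x) + (1/9) * (p₂ x - p₃ x)^2)
    (hr₁ : ∀ x, r₁ x = (1/27) * (2 * p₁ x - p₂ x - p₃ x) *
      (32 * (p₃ x - p₁ x) * (p₂ x - p₁ x) - (p₂ x - p₃ x)^2)) :
    ∀ x ∈ s,
      HasDerivAt p₁ ((1/6) * ((p₁ x)^2 - q₁ x)) x ∧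
      HasDerivAt q₁ ((2/3) * (p₁ x * q₁ x - r₁ x)) x ∧
      HasDerivAt r₁ (p₁ x * r₁ x - (q₁ x)^2) x := by
  intro x hx
  have hq : q₁ = fun y => ramanujanQ (p₁ y) (p₂ y) (p₃ y) := funext hq₁
  have hr : r₁ = fun y => ramanujanR (p₁ y) (p₂ y) (p₃ y) := funext hr₁
  have d₁ : HasDerivAt p₁ (cyclicRHS (p₁ x) (p₂ x) (p₃ x)) x := h₁ x hx
  have d₂ : HasDerivAt p₂ (cyclicRHS (p₂ x) (p₃ x) (p₁ x)) x := h₂ x hx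
  have d₃ : HasDerivAt p₃ (cyclicRHS (p₃ x) (p₁ x) (p₂ x)) x := h₃ x hx
  subst hq hr
  exact ⟨cyclicRHS_eq (p₁ x) (p₂ x) (p₃ x) ▸ d₁, hasDerivAt_ramanujanQ d₁ d₂ d₃,
    hasDerivAt_ramanujanR d₁ d₂ d₃⟩

/-- If `(p₁, p₂, p₃)` satisfy the cyclic first-order system, then with
`q₁ = (16/9)(p₂-p₁)(p₃-p₁) + (1/9)(p₂-p₃)²` and
`r₁ = (1/27)(2p₁-p₂-p₃)(32(p₃-p₁)(p₂-p₁) - (p₂-p₃)²)`,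
the triple `(p₁, q₁, r₁)` satisfies Ramanujan's differential equations. -/
theorem ramanujan_of_p_system (s : Set ℂ) (hs : IsOpen s)
    (p₁ p₂ p₃ q₁ r₁ : ℂ → ℂ)
    (h₁ : ∀ x ∈ s, HasDerivAt p₁
      ((1/6) * (p₁ x)^2 + (8/27) * (p₂ x - p₁ x) * (p₁ x - p₃ x)
        - (1/54) * (p₂ x - p₃ x)^2) x)
    (h₂ : ∀ x ∈ s, HasDerivAt p₂
      ((1/6) * (p₂ x)^2 + (8/27) * (p₃ x - p₂ x) * (p₂ x - p₁ x)
        - (1/54) * (p₃ x - p₁ x)^2) x)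
    (h₃ : ∀ x ∈ s, HasDerivAt p₃
      ((1/6) * (p₃ x)^2 + (8/27) * (p₁ x - p₃ x) * (p₃ x - p₂ x)
        - (1/54) * (p₁ x - p₂ x)^2) x)
    (hq₁ : ∀ x, q₁ x = (16/9) * (p₂ x - p₁ x) * (p₃ x - p₁ x) + (1/9) * (p₂ x - p₃ x)^2)
    (hr₁ : ∀ x, r₁ x = (1/27) * (2 * p₁ x - p₂ x - p₃ x) *
      (32 * (p₃ x - p₁ x) * (p₂ x - p₁ x) - (p₂ x - p₃ x)^2)) :
    ∀ x ∈ s,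
      HasDerivAt p₁ ((1/6) * ((p₁ x)^2 - q₁ x)) x ∧
      HasDerivAt q₁ ((2/3) * (p₁ x * q₁ x - r₁ x)) x ∧
      HasDerivAt r₁ (p₁ x * r₁ x - (q₁ x)^2) x :=
  ramanujan_of_p_system_general s p₁ p₂ p₃ q₁ r₁ h₁ h₂ h₃ hq₁ hr₁
end

section
/- If (p, q, r) satisfies Ramanujan's differential equations p' = (1/6)(p²−q), q' = (2/3)(pq−r), r' = pr − q², then y = p satisfies Chazy's equation y''' − 2yy'' + 3(y')² = 0. -/
/-!
Differentiating `p' = (p² - q)/6` along Ramanujan's system expresses `p''` and `p'''` as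
polynomials in `p, q, r`; the Chazy combination `p''' - 2 p p'' + 3 p'²` of these polynomials
vanishes identically.
-/

theorem hasDerivAt_deriv_of_forall_hasDerivAt {𝕜 F : Type*} [NontriviallyNormedField 𝕜]
    [NormedAddCommGroup F] [NormedSpace 𝕜 F] {f g : 𝕜 → F} {g' : F} {s : Set 𝕜} {x : 𝕜}
    (hs : IsOpen s) (hx : x ∈ s) (hf : ∀ y ∈ s, HasDerivAt f (g y) y)
    (hg : HasDerivAt g g' x) : HasDerivAt (deriv f) g' x :=
  hg.congr_of_eventuallyEq <|
    Filter.eventually_of_mem (hs.mem_nhds hx) fun y hy => (hf y hy).deriv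

section Ramanujan

variable {𝕜 : Type*} [NontriviallyNormedField 𝕜] [CharZero 𝕜] {s : Set 𝕜} {p q r : 𝕜 → 𝕜}

theorem ramanujan_hasDerivAt_deriv (hs : IsOpen s)
    (hp : ∀ x ∈ s, HasDerivAt p ((1/6) * ((p x)^2 - q x)) x)
    (hq : ∀ x ∈ s, HasDerivAt q ((2/3) * (p x * q x - r x)) x) {x : 𝕜} (hx : x ∈ s) :
    HasDerivAt (deriv p) ((1/18) * p x ^ 3 - (1/6) * p x * q x + (1/9) * r x) x := by
  refine hasDerivAt_deriv_of_forall_hasDerivAt hs hx hp ?_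
  refine ((((hp x hx).fun_pow 2).fun_sub (hq x hx)).const_mul (1/6 : 𝕜)).congr_deriv ?_
  norm_num
  ring

theorem ramanujan_hasDerivAt_deriv_deriv (hs : IsOpen s)
    (hp : ∀ x ∈ s, HasDerivAt p ((1/6) * ((p x)^2 - q x)) x)
    (hq : ∀ x ∈ s, HasDerivAt q ((2/3) * (p x * q x - r x)) x)
    (hr : ∀ x ∈ s, HasDerivAt r (p x * r x - (q x)^2) x) {x : 𝕜} (hx : x ∈ s) :
    HasDerivAt (deriv (deriv p))
      ((1/36) * p x ^ 4 - (1/6) * p x ^ 2 * q x - (1/12) * q x ^ 2 + (2/9) * p x * r x) x := by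
  refine hasDerivAt_deriv_of_forall_hasDerivAt hs hx
    (fun y hy => ramanujan_hasDerivAt_deriv hs hp hq hy) ?_
  refine ((((hp x hx).fun_pow 3).const_mul (1/18 : 𝕜)).fun_sub
    (((hp x hx).const_mul (1/6 : 𝕜)).fun_mul (hq x hx))).fun_add
      ((hr x hx).const_mul (1/9 : 𝕜)) |>.congr_deriv ?_
  norm_num
  ring

end Ramanujan

/-- If `(p, q, r)` satisfies Ramanujan's differential equations, then `y = p`
satisfies Chazy's equation `y''' - 2 y y'' + 3 (y')² = 0`. -/
theorem chazy_of_ramanujan (s : Set ℂ) (hs : IsOpen s) (p q r : ℂ → ℂ)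
    (hp : ∀ x ∈ s, HasDerivAt p ((1/6) * ((p x)^2 - q x)) x)
    (hq : ∀ x ∈ s, HasDerivAt q ((2/3) * (p x * q x - r x)) x)
    (hr : ∀ x ∈ s, HasDerivAt r (p x * r x - (q x)^2) x) :
    ∀ x ∈ s,
      deriv (deriv (deriv p)) x - 2 * p x * deriv (deriv p) x + 3 * (deriv p x) ^ 2 = 0 := by
  intro x hx
  rw [(ramanujan_hasDerivAt_deriv_deriv hs hp hq hr hx).deriv,
    (ramanujan_hasDerivAt_deriv hs hp hq hx).deriv, (hp x hx).deriv]
  ring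
end

section
/- Let (P, Q, R) satisfy Ramanujan's differential equations P' = (1/6)(P²−Q), Q' = (2/3)(PQ−R), R' = PR − Q². Let T = R + √(R²−Q³) (any branch with T ≠ 0), v = (3/2)T^{1/3} + (3/2)Q/T^{1/3}, and u = ±√3 · (Q²/T^{2/3} + Q + T^{2/3})^{1/2}. Then the triple (p₂, q₂, r₂) = (P + (u+v)/2, (8/9)u(u+v) + (1/36)(v−u)², (1/54)(3u+v)(16u(u+v) − ((v−u)/2)²)) also satisfies Ramanujan's differential equations. -/
open Complex Filter Topology

/-!
With `a = T3` and `b = Q / T3` one has `a * b = Q` and `a³ + b³ = 2R`, so `w = a + b = 2v/3` is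
Cardano's root of `w³ - 3Qw - 2R = 0`. Ramanujan's equations give `a' = (Pa - b²)/3` and
`b' = (Pb - a²)/3`, hence `v' = Q + Pv/3 - 2v²/9`; since `u² = 4v²/3 - 3Q`, the cubic then gives
`u' = (P/3 - v/9) u`. These two derivatives and `P'` already make the new triple a solution,
modulo the relation for `u²`. The square roots `Sq` and `u` may vanish, so their derivatives are
read off from `f f' = k f²` away from the zeros and extended across them by the isolated zeros
theorem.
-/

lemma deriv_eq_mul_of_mul_deriv_sub_eq_zero {s : Set ℂ} (hs : IsOpen s) {f h : ℂ → ℂ}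
    (hf : DifferentiableOn ℂ f s) (hh : ContinuousOn h s)
    (hfh : ∀ x ∈ s, f x * (deriv f x - h x * f x) = 0) {x : ℂ} (hx : x ∈ s) :
    deriv f x = h x * f x := by
  have hfx := hf.analyticAt (hs.mem_nhds hx)
  rcases hfx.eventually_eq_zero_or_eventually_ne_zero with hzero | hne
  · rw [EventuallyEq.deriv_eq (f := fun _ => (0 : ℂ)) hzero, deriv_const, hzero.self_of_nhds,
      mul_zero]
  · have hcont : ContinuousAt (fun y => deriv f y - h y * f y) x :=
      hfx.deriv.continuousAt.sub ((hh.continuousAt (hs.mem_nhds hx)).mul hfx.continuousAt)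
    have hpunct : ∀ᶠ y in 𝓝[≠] x, deriv f y - h y * f y = 0 := by
      filter_upwards [hne, nhdsWithin_le_nhds (hs.mem_nhds hx)] with y hy hys
      exact (mul_eq_zero.1 (hfh y hys)).resolve_left hy
    exact sub_eq_zero.1 <| tendsto_nhds_unique (hcont.tendsto.mono_left nhdsWithin_le_nhds)
      (tendsto_const_nhds.congr' (hpunct.mono fun y hy => hy.symm))

lemma hasDerivAt_of_pow_eq {s : Set ℂ} (hs : IsOpen s) {f g k : ℂ → ℂ} {n : ℕ} (hn : n ≠ 0)
    (hf : DifferentiableOn ℂ f s) (hk : ContinuousOn k s) (hfg : ∀ x ∈ s, f x ^ n = g x)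
    (hg : ∀ x ∈ s, HasDerivAt g (n * k x * g x) x) {x : ℂ} (hx : x ∈ s) :
    HasDerivAt f (k x * f x) x := by
  obtain ⟨m, rfl⟩ := Nat.exists_eq_succ_of_ne_zero hn
  have hderiv : ∀ y ∈ s, HasDerivAt f (deriv f y) y := fun y hy =>
    (hf.differentiableAt (hs.mem_nhds hy)).hasDerivAt
  have hfk : ∀ y ∈ s, f y * (deriv f y - k y * f y) = 0 := by
    intro y hy
    have hpow : HasDerivAt (f · ^ (m + 1)) ((m + 1) * k y * f y ^ (m + 1)) y := by
      refine (hg y hy).congr_of_eventuallyEq ?_ |>.congr_deriv (by rw [hfg y hy]; push_cast; rfl)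
      filter_upwards [hs.mem_nhds hy] with z hz using hfg z hz
    have key := ((hderiv y hy).pow (m + 1)).unique hpow
    rcases eq_or_ne (f y) 0 with h0 | h0
    · rw [h0, zero_mul]
    · have hne : ((m : ℂ) + 1) * f y ^ m ≠ 0 :=
        mul_ne_zero (Nat.cast_add_one_ne_zero m) (pow_ne_zero m h0)
      push_cast at key
      exact mul_eq_zero_of_right _ (mul_left_cancel₀ hne (by linear_combination key))
  exact deriv_eq_mul_of_mul_deriv_sub_eq_zero hs hf hk hfk hx ▸ hderiv x hx

lemma cardano_cubic {K : Type*} [Field K] [CharZero K] {a Q R : K} (ha : a ≠ 0)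
    (hcubes : 2 * R * a ^ 3 = a ^ 6 + Q ^ 3) :
    4 * ((3/2) * a + (3/2) * Q / a) ^ 3 = 27 * (Q * ((3/2) * a + (3/2) * Q / a) + R) := by
  field_simp
  linear_combination -108 * hcubes

lemma hasDerivAt_cardano_sum {P Q R a v : ℂ → ℂ} {x : ℂ}
    (hQ : HasDerivAt Q ((2/3) * (P x * Q x - R x)) x)
    (ha : HasDerivAt a ((P x - Q x ^ 2 / a x ^ 3) / 3 * a x) x) (ha0 : a x ≠ 0)
    (hcubes : 2 * R x * a x ^ 3 = a x ^ 6 + Q x ^ 3)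
    (hv : ∀ y, v y = (3/2) * a y + (3/2) * Q y / a y) :
    HasDerivAt v (Q x + (1/3) * P x * v x - (2/9) * v x ^ 2) x := by
  rw [show v = _ from funext hv]
  refine ((ha.const_mul (3/2)).add ((hQ.const_mul (3/2)).div ha ha0)).congr_deriv ?_
  beta_reduce
  field_simp
  linear_combination -9 * hcubes

def SolvesRamanujan (s : Set ℂ) (P Q R : ℂ → ℂ) : Prop :=
  ∀ x ∈ s, HasDerivAt P ((1/6) * ((P x)^2 - Q x)) x ∧
    HasDerivAt Q ((2/3) * (P x * Q x - R x)) x ∧ HasDerivAt R (P x * R x - (Q x)^2) x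

namespace SolvesRamanujan

variable {s : Set ℂ} {P Q R : ℂ → ℂ}

lemma continuousOn_P (h : SolvesRamanujan s P Q R) : ContinuousOn P s :=
  fun x hx => (h x hx).1.continuousAt.continuousWithinAt

lemma continuousOn_Q (h : SolvesRamanujan s P Q R) : ContinuousOn Q s :=
  fun x hx => (h x hx).2.1.continuousAt.continuousWithinAt

lemma hasDerivAt_sqrt_discriminant (h : SolvesRamanujan s P Q R) (hs : IsOpen s)
    {Sq : ℂ → ℂ} (hSq : DifferentiableOn ℂ Sq s) (hSq2 : ∀ x ∈ s, Sq x ^ 2 = R x ^ 2 - Q x ^ 3) :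
    ∀ x ∈ s, HasDerivAt Sq (P x * Sq x) x := by
  refine fun x hx =>
    hasDerivAt_of_pow_eq hs two_ne_zero hSq h.continuousOn_P hSq2 (fun y hy => ?_) hx
  obtain ⟨-, hQ, hR⟩ := h y hy
  exact ((hR.pow 2).sub (hQ.pow 3)).congr_deriv (by push_cast; ring)

lemma hasDerivAt_cbrt (h : SolvesRamanujan s P Q R) (hs : IsOpen s) {Sq T3 : ℂ → ℂ}
    (hSq : ∀ x ∈ s, HasDerivAt Sq (P x * Sq x) x) (hT3 : DifferentiableOn ℂ T3 s)
    (hT3c : ∀ x ∈ s, T3 x ^ 3 = R x + Sq x) (hT3ne : ∀ x ∈ s, T3 x ≠ 0) :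
    ∀ x ∈ s, HasDerivAt T3 ((P x - Q x ^ 2 / T3 x ^ 3) / 3 * T3 x) x := by
  have hk : ContinuousOn (fun y => (P y - Q y ^ 2 / T3 y ^ 3) / 3) s :=
    (h.continuousOn_P.sub ((h.continuousOn_Q.pow 2).div (hT3.continuousOn.pow 3)
      fun y hy => pow_ne_zero 3 (hT3ne y hy))).div_const 3
  refine fun x hx => hasDerivAt_of_pow_eq hs three_ne_zero hT3 hk hT3c (fun y hy => ?_) hx
  refine ((h y hy).2.2.add (hSq y hy)).congr_deriv ?_
  field_simp [hT3ne y hy]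
  linear_combination -3 * Q y ^ 2 * hT3c y hy

lemma hasDerivAt_sqrt_of_cubic (h : SolvesRamanujan s P Q R) (hs : IsOpen s) {u v : ℂ → ℂ}
    (hu : DifferentiableOn ℂ u s) (huv : ∀ x ∈ s, u x ^ 2 = (4/3) * v x ^ 2 - 3 * Q x)
    (hv : ∀ x ∈ s, HasDerivAt v (Q x + (1/3) * P x * v x - (2/9) * v x ^ 2) x)
    (hcubic : ∀ x ∈ s, 4 * v x ^ 3 = 27 * (Q x * v x + R x)) :
    ∀ x ∈ s, HasDerivAt u (((1/3) * P x - (1/9) * v x) * u x) x := by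
  have hk : ContinuousOn (fun y => (1/3) * P y - (1/9) * v y) s :=
    (continuousOn_const.mul h.continuousOn_P).sub
      (continuousOn_const.mul fun y hy => (hv y hy).continuousAt.continuousWithinAt)
  refine fun x hx => hasDerivAt_of_pow_eq hs two_ne_zero hu hk huv (fun y hy => ?_) hx
  refine (((hv y hy).pow 2).const_mul (4/3) |>.sub ((h y hy).2.1.const_mul 3)).congr_deriv ?_
  push_cast
  linear_combination (-2/27 : ℂ) * hcubic y hy

end SolvesRamanujan

lemma solvesRamanujan_transform {s : Set ℂ} {P Q u v : ℂ → ℂ}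
    (hP : ∀ x ∈ s, HasDerivAt P ((1/6) * ((P x)^2 - Q x)) x)
    (hu : ∀ x ∈ s, HasDerivAt u (((1/3) * P x - (1/9) * v x) * u x) x)
    (hv : ∀ x ∈ s, HasDerivAt v (Q x + (1/3) * P x * v x - (2/9) * v x ^ 2) x)
    (huv : ∀ x ∈ s, u x ^ 2 = (4/3) * v x ^ 2 - 3 * Q x) :
    SolvesRamanujan s (fun x => P x + (u x + v x) / 2)
      (fun x => (8/9) * u x * (u x + v x) + (1/36) * (v x - u x)^2)
      (fun x => (1/54) * (3 * u x + v x) * (16 * u x * (u x + v x) - ((v x - u x) / 2)^2)) := by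
  intro x hx
  have hu := hu x hx
  have hv := hv x hx
  have huv := huv x hx
  refine ⟨?_, ?_, ?_⟩
  · refine ((hP x hx).add ((hu.add hv).div_const 2)).congr_deriv ?_
    linear_combination (1/9 : ℂ) * huv
  · refine (((hu.const_mul (8/9)).mul (hu.add hv)).add
      (((hv.sub hu).pow 2).const_mul (1/36))).congr_deriv ?_
    simp only [Pi.add_apply, Pi.sub_apply]
    push_cast
    linear_combination ((1/54 : ℂ) * v x + (5/18 : ℂ) * u x) * huv
  · refine ((((hu.const_mul 3).add hv).const_mul (1/54)).mul
      (((hu.const_mul 16).mul (hu.add hv)).sub (((hv.sub hu).div_const 2).pow 2))).congr_deriv ?_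
    simp only [Pi.add_apply, Pi.sub_apply, Pi.mul_apply, Pi.pow_apply]
    push_cast
    linear_combination
      ((-1/216 : ℂ) * v x ^ 2 + (7/36 : ℂ) * u x * v x + (29/72 : ℂ) * u x ^ 2) * huv

/-- Given `(P, Q, R)` satisfying Ramanujan's differential equations, with
`T = R + √(R²-Q³)` holomorphic and nonvanishing, `T3` a holomorphic cube root of
`T`, `v = (3/2)T3 + (3/2)Q/T3`, and `u` a holomorphic square root of
`3(Q²/T3² + Q + T3²)`, the triple
`(P + (u+v)/2, (8/9)u(u+v) + (1/36)(v-u)², (1/54)(3u+v)(16u(u+v) - ((v-u)/2)²))`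
also satisfies Ramanujan's differential equations. -/
theorem ramanujan_automorphism (s : Set ℂ) (hs : IsOpen s)
    (P Q R Sq T3 u v p₂ q₂ r₂ : ℂ → ℂ)
    (hP : ∀ x ∈ s, HasDerivAt P ((1/6) * ((P x)^2 - Q x)) x)
    (hQ : ∀ x ∈ s, HasDerivAt Q ((2/3) * (P x * Q x - R x)) x)
    (hR : ∀ x ∈ s, HasDerivAt R (P x * R x - (Q x)^2) x)
    (hSq : DifferentiableOn ℂ Sq s)
    (hSq2 : ∀ x ∈ s, (Sq x)^2 = (R x)^2 - (Q x)^3)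
    (hT3 : DifferentiableOn ℂ T3 s)
    (hT3c : ∀ x ∈ s, (T3 x)^3 = R x + Sq x)
    (hTne : ∀ x ∈ s, R x + Sq x ≠ 0)
    (hu : DifferentiableOn ℂ u s)
    (hu2 : ∀ x ∈ s, (u x)^2 = 3 * ((Q x)^2 / (T3 x)^2 + Q x + (T3 x)^2))
    (hv : ∀ x, v x = (3/2) * T3 x + (3/2) * Q x / T3 x)
    (hp₂ : ∀ x, p₂ x = P x + (u x + v x) / 2)
    (hq₂ : ∀ x, q₂ x = (8/9) * u x * (u x + v x) + (1/36) * (v x - u x)^2)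
    (hr₂ : ∀ x, r₂ x = (1/54) * (3 * u x + v x) *
      (16 * u x * (u x + v x) - ((v x - u x) / 2)^2)) :
    ∀ x ∈ s,
      HasDerivAt p₂ ((1/6) * ((p₂ x)^2 - q₂ x)) x ∧
      HasDerivAt q₂ ((2/3) * (p₂ x * q₂ x - r₂ x)) x ∧
      HasDerivAt r₂ (p₂ x * r₂ x - (q₂ x)^2) x := by
  have h : SolvesRamanujan s P Q R := fun x hx => ⟨hP x hx, hQ x hx, hR x hx⟩
  have hT3ne : ∀ x ∈ s, T3 x ≠ 0 := fun x hx =>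
    ne_zero_pow three_ne_zero (hT3c x hx ▸ hTne x hx)
  have hcubes : ∀ x ∈ s, 2 * R x * T3 x ^ 3 = T3 x ^ 6 + Q x ^ 3 := fun x hx => by
    linear_combination -(T3 x ^ 3 - R x + Sq x) * hT3c x hx - hSq2 x hx
  have hT3D := h.hasDerivAt_cbrt hs (h.hasDerivAt_sqrt_discriminant hs hSq hSq2) hT3 hT3c hT3ne
  have hvD : ∀ x ∈ s, HasDerivAt v (Q x + (1/3) * P x * v x - (2/9) * v x ^ 2) x :=
    fun x hx => hasDerivAt_cardano_sum (hQ x hx) (hT3D x hx) (hT3ne x hx) (hcubes x hx) hv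
  have huv : ∀ x ∈ s, u x ^ 2 = (4/3) * v x ^ 2 - 3 * Q x := fun x hx => by
    rw [hu2 x hx, hv x]
    field_simp [hT3ne x hx]
    ring
  have huD := h.hasDerivAt_sqrt_of_cubic hs hu huv hvD
    fun x hx => hv x ▸ cardano_cubic (hT3ne x hx) (hcubes x hx)
  obtain rfl : p₂ = _ := funext hp₂
  obtain rfl : q₂ = _ := funext hq₂
  obtain rfl : r₂ = _ := funext hr₂
  exact solvesRamanujan_transform hP huD hvD huv
end

section
/- With T = R + √(R²−Q³), p₀ = P + (1/2)T^{1/3} + (1/2)Q/T^{1/3}, q₀ = (3/2)Q + (5/4)T^{2/3} + (5/4)Q²/T^{2/3}, r₀ = (11/4)R + (21/8)QT^{1/3} + (21/8)Q²/T^{1/3}, and t = r₀ + √(r₀² − q₀³), the inverse relations hold: P = p₀ + (1/2)t^{1/3} + (1/2)q₀/t^{1/3}, Q = (3/2)q₀ + (5/4)t^{2/3} + (5/4)q₀²/t^{2/3}, R = (11/4)r₀ + (21/8)q₀t^{1/3} + (21/8)q₀²/t^{1/3} (for appropriate choices of branch). -/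
/-!
Put `u = T^{1/3}` and `v = Q / T^{1/3}`, so that `Q = u v` and `2R = u³ + v³` (Cardano). Then
`p₀ = P + (u + v)/2`, `q₀ = dualQ u v` and `r₀ = dualR u v`. Let `t, s` be the roots of
`X² + (u + v) X + q₀`. This relation between the pairs `(u, v)` and `(t, s)` is symmetric and forces
`t³ + s³ = 2 r₀`, so `t³` and `s³` are the roots of `X² - 2 r₀ X + q₀³`: the pair `(t, q₀ / t)` is
the Cardano pair of `(p₀, q₀, r₀)`, and by symmetry the same formulas lead back to `(P, Q, R)`.
-/

namespace RamanujanDuality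

variable {K : Type*} [Field K]

def dualQ (u v : K) : K := 3/2 * (u * v) + 5/4 * u ^ 2 + 5/4 * v ^ 2

def dualR (u v : K) : K := 11/8 * (u ^ 3 + v ^ 3) + 21/8 * (u * v) * (u + v)

def IsDualPair (u v t s : K) : Prop := t + s = -(u + v) ∧ t * s = dualQ u v

section CharZero

variable [CharZero K] {u v t s : K}

theorem IsDualPair.symm (h : IsDualPair u v t s) : IsDualPair t s u v := by
  obtain ⟨hsum, hprod⟩ := h
  refine ⟨by linear_combination hsum, ?_⟩
  unfold dualQ at hprod ⊢
  linear_combination hprod + 5/4 * (u + v - t - s) * hsum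

theorem IsDualPair.cube_add_cube (h : IsDualPair u v t s) : t ^ 3 + s ^ 3 = 2 * dualR u v := by
  obtain ⟨hsum, hprod⟩ := h
  unfold dualQ at hprod
  unfold dualR
  linear_combination
    ((t + s) ^ 2 - (t + s) * (u + v) + (u + v) ^ 2 - 3 * (t * s)) * hsum + 3 * (u + v) * hprod

end CharZero

theorem exists_isDualPair [CharZero K] [IsAlgClosed K] {u : K} (hu : u ≠ 0) (v : K) :
    ∃ t s : K, IsDualPair u v t s ∧ t ≠ 0 := by
  obtain ⟨g, hg⟩ := IsAlgClosed.exists_pow_nat_eq (-(u ^ 2 + u * v + v ^ 2)) two_pos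
  have hpair : ∀ g' : K, g' ^ 2 = -(u ^ 2 + u * v + v ^ 2) →
      IsDualPair u v (g' - (u + v) / 2) (-g' - (u + v) / 2) := fun g' hg' =>
    ⟨by ring, by unfold dualQ; linear_combination -hg'⟩
  by_cases h : g - (u + v) / 2 = 0
  · refine ⟨_, _, hpair (-g) (by rwa [neg_sq]), fun h' => hu ?_⟩
    have hg0 : g = 0 := by linear_combination (h - h') / 2
    have hv : v = -u := by linear_combination -(h + h')
    rw [hg0, hv] at hg
    exact pow_eq_zero_iff two_ne_zero |>.mp (by linear_combination hg)
  · exact ⟨_, _, hpair g hg, h⟩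

theorem two_mul_eq_cube_add_cube_of_sq_eq {R Sq u v : K} (hSq : Sq ^ 2 = R ^ 2 - (u * v) ^ 3)
    (hu3 : u ^ 3 = R + Sq) (hu : u ≠ 0) : 2 * R = u ^ 3 + v ^ 3 := by
  have h : u ^ 3 * (u ^ 3 + v ^ 3 - 2 * R) = 0 := by
    linear_combination hSq + (u ^ 3 - R + Sq) * hu3
  linear_combination -((mul_eq_zero.mp h).resolve_left (pow_ne_zero 3 hu))

end RamanujanDuality

open RamanujanDuality in
/-- Algebraic duality: with `T = R + √(R²-Q³)` nonzero, `T3` a cube root of `T`,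
`p₀ = P + (1/2)T3 + (1/2)Q/T3`, `q₀ = (3/2)Q + (5/4)T3² + (5/4)Q²/T3²`,
`r₀ = (11/4)R + (21/8)Q·T3 + (21/8)Q²/T3`, and `t = r₀ + √(r₀² - q₀³)`, the
inverse relations `P = p₀ + (1/2)t^{1/3} + (1/2)q₀/t^{1/3}`,
`Q = (3/2)q₀ + (5/4)t^{2/3} + (5/4)q₀²/t^{2/3}`,
`R = (11/4)r₀ + (21/8)q₀ t^{1/3} + (21/8)q₀²/t^{1/3}` hold for appropriate
branches. -/
theorem ramanujan_duality_algebraic (P Q R Sq T3 p₀ q₀ r₀ : ℂ)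
    (hSq : Sq^2 = R^2 - Q^3)
    (hT3 : T3^3 = R + Sq)
    (hTne : R + Sq ≠ 0)
    (hp₀ : p₀ = P + (1/2) * T3 + (1/2) * Q / T3)
    (hq₀ : q₀ = (3/2) * Q + (5/4) * T3^2 + (5/4) * Q^2 / T3^2)
    (hr₀ : r₀ = (11/4) * R + (21/8) * Q * T3 + (21/8) * Q^2 / T3) :
    ∃ sq t3 : ℂ, sq^2 = r₀^2 - q₀^3 ∧ t3^3 = r₀ + sq ∧ t3 ≠ 0 ∧
      P = p₀ + (1/2) * t3 + (1/2) * q₀ / t3 ∧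
      Q = (3/2) * q₀ + (5/4) * t3^2 + (5/4) * q₀^2 / t3^2 ∧
      R = (11/4) * r₀ + (21/8) * q₀ * t3 + (21/8) * q₀^2 / t3 := by
  have hT3ne : T3 ≠ 0 := by rintro rfl; exact hTne (by rw [← hT3]; ring)
  obtain ⟨v, rfl⟩ : ∃ v, Q = T3 * v := ⟨Q / T3, (mul_div_cancel₀ Q hT3ne).symm⟩
  have hR := two_mul_eq_cube_add_cube_of_sq_eq hSq hT3 hT3ne
  have hp : p₀ = P + (T3 + v) / 2 := by
    rw [hp₀, mul_div_assoc, mul_div_cancel_left₀ v hT3ne]; ring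
  have hq : q₀ = dualQ T3 v := by rw [hq₀, dualQ]; field_simp
  have hr : r₀ = dualR T3 v := by
    have hv : (T3 * v) ^ 2 / T3 = T3 * v ^ 2 := by field_simp
    rw [hr₀, dualR, mul_div_assoc, hv]
    linear_combination 11/8 * hR
  obtain ⟨t, s, hts, ht⟩ := exists_isDualPair hT3ne v
  have hcube : t ^ 3 + s ^ 3 = 2 * r₀ := hr ▸ hts.cube_add_cube
  have hcube' := hts.symm.cube_add_cube
  obtain ⟨-, hprod'⟩ := hts.symm
  obtain ⟨hsum, hprod⟩ := hts
  obtain rfl : q₀ = t * s := hq.trans hprod.symm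
  have hdiv : t * s / t = s := mul_div_cancel_left₀ s ht
  refine ⟨t ^ 3 - r₀, t, ?_, by ring, ht, ?_, ?_, ?_⟩
  · linear_combination t ^ 3 * hcube
  · rw [mul_div_assoc, hdiv, hp]
    linear_combination -hsum / 2
  · rw [mul_div_assoc, ← div_pow, hdiv, hprod', dualQ]
  · rw [mul_div_assoc, sq, mul_div_assoc, hdiv]
    unfold dualR at hcube'
    linear_combination hR / 2 + hcube' / 2 + 11/8 * hcube
end

section
/- If (p, q, r) are smooth functions satisfying p' = (1/6)(p²−q), q' = (2/3)(pq−r), r' = pr + (k²/(36−k²))q² for a parameter k with k² ≠ 36, then y = p satisfies the generalised Chazy equation y''' − 2yy'' + 3(y')² − (4/(36−k²))(6y' − y²)² = 0. -/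
/-!
Along the system, `6 p' - p² = -q`, and differentiating twice expresses `p''` and `p'''` as
polynomials in `p, q, r`. For the system `r' = p r + c q²` the Chazy expression then collapses to
the identity `p''' - 2 p p'' + 3 p'² = ((1 + c) / 9) q²`; the value `c = k² / (36 - k²)` turns
`(1 + c) / 9` into `4 / (36 - k²)`.
-/

section ChazySystem

variable {𝕜 : Type*} [NontriviallyNormedField 𝕜] {s : Set 𝕜} {c : 𝕜} {p q r : 𝕜 → 𝕜}

theorem hasDerivAt_deriv_of_eqOn {f F : 𝕜 → 𝕜} (hs : IsOpen s) (h : s.EqOn (deriv f) F)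
    {x : 𝕜} (hx : x ∈ s) {F' : 𝕜} (hF : HasDerivAt F F' x) : HasDerivAt (deriv f) F' x :=
  hF.congr_of_eventuallyEq (Filter.eventuallyEq_of_mem (hs.mem_nhds hx) h)

theorem chazySystem_deriv_eqOn (hp : ∀ x ∈ s, HasDerivAt p ((1/6) * ((p x)^2 - q x)) x) :
    s.EqOn (deriv p) (fun x => (1/6) * ((p x)^2 - q x)) :=
  fun x hx => (hp x hx).deriv

variable [CharZero 𝕜]

theorem chazySystem_hasDerivAt_deriv (hs : IsOpen s)
    (hp : ∀ x ∈ s, HasDerivAt p ((1/6) * ((p x)^2 - q x)) x)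
    (hq : ∀ x ∈ s, HasDerivAt q ((2/3) * (p x * q x - r x)) x) {x : 𝕜} (hx : x ∈ s) :
    HasDerivAt (deriv p) ((1/18) * (p x)^3 - (1/6) * (p x * q x) + (1/9) * r x) x := by
  refine hasDerivAt_deriv_of_eqOn hs (chazySystem_deriv_eqOn hp) hx ?_
  refine ((((hp x hx).pow 2).sub (hq x hx)).const_mul (1/6 : 𝕜)).congr_deriv ?_
  norm_num
  ring

theorem chazySystem_hasDerivAt_deriv_deriv (hs : IsOpen s)
    (hp : ∀ x ∈ s, HasDerivAt p ((1/6) * ((p x)^2 - q x)) x)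
    (hq : ∀ x ∈ s, HasDerivAt q ((2/3) * (p x * q x - r x)) x)
    (hr : ∀ x ∈ s, HasDerivAt r (p x * r x + c * (q x)^2) x) {x : 𝕜} (hx : x ∈ s) :
    HasDerivAt (deriv (deriv p))
      ((1/36) * (p x)^4 - (1/6) * ((p x)^2 * q x) + (2/9) * (p x * r x)
        + ((1 + 4 * c) / 36) * (q x)^2) x := by
  refine hasDerivAt_deriv_of_eqOn hs
    (fun y hy => (chazySystem_hasDerivAt_deriv hs hp hq hy).deriv) hx ?_
  refine ((((hp x hx).pow 3).const_mul (1/18 : 𝕜)).sub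
    (((hp x hx).mul (hq x hx)).const_mul (1/6 : 𝕜))).add ((hr x hx).const_mul (1/9 : 𝕜))
    |>.congr_deriv ?_
  norm_num
  ring

theorem chazy_of_system (hs : IsOpen s)
    (hp : ∀ x ∈ s, HasDerivAt p ((1/6) * ((p x)^2 - q x)) x)
    (hq : ∀ x ∈ s, HasDerivAt q ((2/3) * (p x * q x - r x)) x)
    (hr : ∀ x ∈ s, HasDerivAt r (p x * r x + c * (q x)^2) x) {x : 𝕜} (hx : x ∈ s) :
    deriv (deriv (deriv p)) x - 2 * p x * deriv (deriv p) x + 3 * (deriv p x)^2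
      - ((1 + c) / 9) * (6 * deriv p x - (p x)^2)^2 = 0 := by
  rw [(chazySystem_hasDerivAt_deriv_deriv hs hp hq hr hx).deriv,
    (chazySystem_hasDerivAt_deriv hs hp hq hx).deriv, (hp x hx).deriv]
  ring

end ChazySystem

/-- If `(p, q, r)` satisfy the first-order system associated to the generalised
Chazy equation with parameter `k` (with `k² ≠ 36`), then `y = p` satisfies the
generalised Chazy equation
`y''' - 2yy'' + 3(y')² - (4/(36-k²))(6y' - y²)² = 0`. -/
theorem generalised_chazy_of_system (s : Set ℂ) (hs : IsOpen s) (k : ℂ)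
    (hk : k^2 ≠ 36) (p q r : ℂ → ℂ)
    (hp : ∀ x ∈ s, HasDerivAt p ((1/6) * ((p x)^2 - q x)) x)
    (hq : ∀ x ∈ s, HasDerivAt q ((2/3) * (p x * q x - r x)) x)
    (hr : ∀ x ∈ s, HasDerivAt r (p x * r x + (k^2 / (36 - k^2)) * (q x)^2) x) :
    ∀ x ∈ s,
      deriv (deriv (deriv p)) x - 2 * p x * deriv (deriv p) x + 3 * (deriv p x)^2
        - (4 / (36 - k^2)) * (6 * deriv p x - (p x)^2)^2 = 0 := by
  intro x hx
  have hk' : (36 : ℂ) - k^2 ≠ 0 := sub_ne_zero.mpr hk.symm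
  have hcoeff : (1 + k^2 / (36 - k^2)) / 9 = 4 / (36 - k^2) := by
    field_simp
    ring
  simpa only [hcoeff] using chazy_of_system hs hp hq hr hx
end

section
/- Suppose (p₁, p₂, p₃) satisfy the cyclic system p₁' − (1/6)p₁² = (5/18)(p₂−p₃)², p₂' − (1/6)p₂² = (5/18)(p₃−p₁)², p₃' − (1/6)p₃² = (5/18)(p₁−p₂)². Define q₁ = −(5/3)(p₂−p₃)² and r₁ = −(1/3)q₁(2p₁−p₂−p₃). Then (p₁, q₁, r₁) satisfies p₁' = (1/6)(p₁²−q₁), q₁' = (2/3)(p₁q₁−r₁), r₁' = p₁r₁ + (1/15)q₁², i.e. the first-order system associated to the generalised Chazy equation with k = 3/2. -/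
open Complex

/-!
Write `d = p₂ - p₃` and `e = 2p₁ - p₂ - p₃`, so that `q₁ = -(5/3) d²` and `r₁ = -(1/3) q₁ e`.
Since `(p₃ - p₁)² - (p₁ - p₂)² = -d e`, the cyclic system gives the linear equation
`d' = d ((5/9) p₁ - (1/9)(p₂ + p₃))`, so `q₁' = -(10/3) d d'` is again a multiple of `d²`; this is
the equation for `q₁`. The equation for `r₁` then follows from the product rule.
-/

section CyclicSystem

variable {𝕜 : Type*} [NontriviallyNormedField 𝕜] [CharZero 𝕜] {p₁ p₂ p₃ q r : 𝕜 → 𝕜} {x : 𝕜}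

theorem hasDerivAt_sub_of_cyclic
    (h₂ : HasDerivAt p₂ ((1/6) * (p₂ x)^2 + (5/18) * (p₃ x - p₁ x)^2) x)
    (h₃ : HasDerivAt p₃ ((1/6) * (p₃ x)^2 + (5/18) * (p₁ x - p₂ x)^2) x) :
    HasDerivAt (fun y => p₂ y - p₃ y)
      ((p₂ x - p₃ x) * ((5/9) * p₁ x - (1/9) * (p₂ x + p₃ x))) x :=
  (h₂.sub h₃).congr_deriv (by ring)

theorem hasDerivAt_chazy_q_of_cyclic
    (h₂ : HasDerivAt p₂ ((1/6) * (p₂ x)^2 + (5/18) * (p₃ x - p₁ x)^2) x)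
    (h₃ : HasDerivAt p₃ ((1/6) * (p₃ x)^2 + (5/18) * (p₁ x - p₂ x)^2) x)
    (hq : ∀ y, q y = -(5/3) * (p₂ y - p₃ y)^2)
    (hr : ∀ y, r y = -(1/3) * q y * (2 * p₁ y - p₂ y - p₃ y)) :
    HasDerivAt q ((2/3) * (p₁ x * q x - r x)) x := by
  rw [show q = fun y => -(5/3) * (p₂ y - p₃ y)^2 from funext hq]
  refine (((hasDerivAt_sub_of_cyclic h₂ h₃).pow 2).const_mul _).congr_deriv ?_
  rw [hr, hq]
  ring

theorem hasDerivAt_chazy_r_of_cyclic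
    (h₁ : HasDerivAt p₁ ((1/6) * (p₁ x)^2 + (5/18) * (p₂ x - p₃ x)^2) x)
    (h₂ : HasDerivAt p₂ ((1/6) * (p₂ x)^2 + (5/18) * (p₃ x - p₁ x)^2) x)
    (h₃ : HasDerivAt p₃ ((1/6) * (p₃ x)^2 + (5/18) * (p₁ x - p₂ x)^2) x)
    (hq : ∀ y, q y = -(5/3) * (p₂ y - p₃ y)^2)
    (hr : ∀ y, r y = -(1/3) * q y * (2 * p₁ y - p₂ y - p₃ y)) :
    HasDerivAt r (p₁ x * r x + (1/15) * (q x)^2) x := by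
  have hq' := hasDerivAt_chazy_q_of_cyclic h₂ h₃ hq hr
  rw [show r = fun y => -(1/3) * q y * (2 * p₁ y - p₂ y - p₃ y) from funext hr]
  refine ((hq'.const_mul _).mul (((h₁.const_mul 2).sub h₂).sub h₃)).congr_deriv ?_
  simp only [hr, hq, Pi.sub_apply]
  ring

end CyclicSystem

theorem chazy32_system_of_p_general (s : Set ℂ)
    (p₁ p₂ p₃ q₁ r₁ : ℂ → ℂ)
    (h₁ : ∀ x ∈ s, HasDerivAt p₁ ((1/6) * (p₁ x)^2 + (5/18) * (p₂ x - p₃ x)^2) x)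
    (h₂ : ∀ x ∈ s, HasDerivAt p₂ ((1/6) * (p₂ x)^2 + (5/18) * (p₃ x - p₁ x)^2) x)
    (h₃ : ∀ x ∈ s, HasDerivAt p₃ ((1/6) * (p₃ x)^2 + (5/18) * (p₁ x - p₂ x)^2) x)
    (hq₁ : ∀ x, q₁ x = -(5/3) * (p₂ x - p₃ x)^2)
    (hr₁ : ∀ x, r₁ x = -(1/3) * q₁ x * (2 * p₁ x - p₂ x - p₃ x)) :
    ∀ x ∈ s,
      HasDerivAt p₁ ((1/6) * ((p₁ x)^2 - q₁ x)) x ∧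
      HasDerivAt q₁ ((2/3) * (p₁ x * q₁ x - r₁ x)) x ∧
      HasDerivAt r₁ (p₁ x * r₁ x + (1/15) * (q₁ x)^2) x := by
  intro x hx
  refine ⟨(h₁ x hx).congr_deriv ?_,
    hasDerivAt_chazy_q_of_cyclic (h₂ x hx) (h₃ x hx) hq₁ hr₁,
    hasDerivAt_chazy_r_of_cyclic (h₁ x hx) (h₂ x hx) (h₃ x hx) hq₁ hr₁⟩
  rw [hq₁]
  ring

/-- If `(p₁, p₂, p₃)` satisfy the cyclic system
`pᵢ' - (1/6)pᵢ² = (5/18)(p_{i+1} - p_{i+2})²`, then with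
`q₁ = -(5/3)(p₂-p₃)²` and `r₁ = -(1/3)q₁(2p₁-p₂-p₃)` the triple `(p₁, q₁, r₁)`
satisfies the first-order system associated to the generalised Chazy equation
with `k = 3/2`. -/
theorem chazy32_system_of_p (s : Set ℂ) (hs : IsOpen s)
    (p₁ p₂ p₃ q₁ r₁ : ℂ → ℂ)
    (h₁ : ∀ x ∈ s, HasDerivAt p₁ ((1/6) * (p₁ x)^2 + (5/18) * (p₂ x - p₃ x)^2) x)
    (h₂ : ∀ x ∈ s, HasDerivAt p₂ ((1/6) * (p₂ x)^2 + (5/18) * (p₃ x - p₁ x)^2) x)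
    (h₃ : ∀ x ∈ s, HasDerivAt p₃ ((1/6) * (p₃ x)^2 + (5/18) * (p₁ x - p₂ x)^2) x)
    (hq₁ : ∀ x, q₁ x = -(5/3) * (p₂ x - p₃ x)^2)
    (hr₁ : ∀ x, r₁ x = -(1/3) * q₁ x * (2 * p₁ x - p₂ x - p₃ x)) :
    ∀ x ∈ s,
      HasDerivAt p₁ ((1/6) * ((p₁ x)^2 - q₁ x)) x ∧
      HasDerivAt q₁ ((2/3) * (p₁ x * q₁ x - r₁ x)) x ∧
      HasDerivAt r₁ (p₁ x * r₁ x + (1/15) * (q₁ x)^2) x :=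
  chazy32_system_of_p_general s p₁ p₂ p₃ q₁ r₁ h₁ h₂ h₃ hq₁ hr₁
end

section
/- Let (P, Q, R) satisfy P' = (1/6)(P²−Q), Q' = (2/3)(PQ−R), R' = PR + (1/15)Q², with Q nonvanishing. Let Z = 3R/(2Q) + (1/2)√(−3Q/5) and Z̄ = 3R/(2Q) − (1/2)√(−3Q/5) (for a holomorphic branch of the square root). Then the triple (P + Z, −(5/3)Z̄², (5/9)Z̄²(2Z − Z̄)) also satisfies the same system P' = (1/6)(P²−Q), Q' = (2/3)(PQ−R), R' = PR + (1/15)Q². -/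
/-!
In the variables `V = 3R/(2Q)` and `W = √(-3Q/5)`, i.e. `Q = -(5/3)W²`, `R = -(10/9)VW²`, the
system becomes polynomial:
`P' = P²/6 + 5W²/18`, `V' = PV/3 + 4V²/9 - W²/6`, `W' = (P/3 - 2V/9) W`.
Since `Z = V + W/2` and `Z̄ = V - W/2`, the new triple is `(P₂, -(5/3)W₂², -(10/9)V₂W₂²)` for
`(P₂, V₂, W₂) = (P + V + W/2, -V/2 - 3W/4, V - W/2)`, and this linear map is a symmetry of the
reduced system.
-/

open Filter Topology

namespace Chazy32

variable {𝕜 : Type*} [NontriviallyNormedField 𝕜] [CharZero 𝕜]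

def IsSolAt (P Q R : 𝕜 → 𝕜) (x : 𝕜) : Prop :=
  HasDerivAt P ((1/6) * ((P x)^2 - Q x)) x ∧
  HasDerivAt Q ((2/3) * (P x * Q x - R x)) x ∧
  HasDerivAt R (P x * R x + (1/15) * (Q x)^2) x

def IsReducedSolAt (P V W : 𝕜 → 𝕜) (x : 𝕜) : Prop :=
  HasDerivAt P ((1/6) * (P x)^2 + (5/18) * (W x)^2) x ∧
  HasDerivAt V ((1/3) * P x * V x + (4/9) * (V x)^2 - (1/6) * (W x)^2) x ∧
  HasDerivAt W ((1/3) * P x * W x - (2/9) * V x * W x) x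

theorem IsSolAt.isReducedSolAt {P Q R W : 𝕜 → 𝕜} {x : 𝕜} (h : IsSolAt P Q R x)
    (hQx : Q x ≠ 0) (hW : DifferentiableAt 𝕜 W x)
    (hW2 : ∀ᶠ y in 𝓝 x, W y ^ 2 = -(3/5) * Q y) :
    IsReducedSolAt P (fun y => 3 * R y / (2 * Q y)) W x := by
  obtain ⟨hP, hQ, hR⟩ := h
  have hQW : Q x = -(5/3) * W x ^ 2 := by linear_combination (5/3 : 𝕜) * hW2.self_of_nhds
  have hWx : W x ≠ 0 := fun h0 => hQx (by rw [hQW, h0]; ring)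
  refine ⟨?_, ?_, ?_⟩
  · exact hP.congr_deriv (by rw [hQW]; ring)
  · refine ((hR.const_mul 3).div (hQ.const_mul 2) (mul_ne_zero two_ne_zero hQx)).congr_deriv ?_
    field_simp
    rw [hQW]; ring
  · have hsq : HasDerivAt (fun y => W y ^ 2) (2 * W x * deriv W x) x := by
      simpa using hW.hasDerivAt.fun_pow 2
    have hsq' : HasDerivAt (fun y => W y ^ 2) (-(3/5) * ((2/3) * (P x * Q x - R x))) x :=
      (hQ.const_mul _).congr_of_eventuallyEq hW2
    refine hW.hasDerivAt.congr_deriv ?_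
    refine mul_left_cancel₀ (mul_ne_zero (two_ne_zero' 𝕜) hWx) ?_
    rw [hsq.unique hsq']
    field_simp
    rw [hQW]; ring

theorem IsReducedSolAt.isSolAt {P V W : 𝕜 → 𝕜} {x : 𝕜} (h : IsReducedSolAt P V W x) :
    IsSolAt P (fun y => -(5/3) * W y ^ 2) (fun y => -(10/9) * V y * W y ^ 2) x := by
  obtain ⟨hP, hV, hW⟩ := h
  refine ⟨?_, ?_, ?_⟩
  · exact hP.congr_deriv (by ring)
  · exact ((hW.fun_pow 2).const_mul (-(5/3) : 𝕜)).congr_deriv (by push_cast; ring)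
  · exact ((hV.const_mul (-(10/9) : 𝕜)).mul (hW.fun_pow 2)).congr_deriv (by push_cast; ring)

theorem IsReducedSolAt.symmetry {P V W : 𝕜 → 𝕜} {x : 𝕜} (h : IsReducedSolAt P V W x) :
    IsReducedSolAt (fun y => P y + V y + W y / 2) (fun y => -(V y / 2) - 3/4 * W y)
      (fun y => V y - W y / 2) x := by
  obtain ⟨hP, hV, hW⟩ := h
  refine ⟨?_, ?_, ?_⟩
  · exact ((hP.add hV).add (hW.div_const 2)).congr_deriv (by ring)
  · exact ((hV.div_const 2).neg.sub (hW.const_mul (3/4))).congr_deriv (by ring)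
  · exact (hV.sub (hW.div_const 2)).congr_deriv (by ring)

end Chazy32

/-- Given `(P, Q, R)` satisfying the first-order system associated to the
generalised Chazy equation with `k = 3/2` and `Q` nonvanishing, with
`Z = 3R/(2Q) + (1/2)W` and `Z̄ = 3R/(2Q) - (1/2)W` for a holomorphic square
root `W` of `-3Q/5`, the triple `(P + Z, -(5/3)Z̄², (5/9)Z̄²(2Z - Z̄))` also
satisfies the same system. -/
theorem chazy32_automorphism (s : Set ℂ) (hs : IsOpen s)
    (P Q R W Z Zb p₂ q₂ r₂ : ℂ → ℂ)
    (hP : ∀ x ∈ s, HasDerivAt P ((1/6) * ((P x)^2 - Q x)) x)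
    (hQ : ∀ x ∈ s, HasDerivAt Q ((2/3) * (P x * Q x - R x)) x)
    (hR : ∀ x ∈ s, HasDerivAt R (P x * R x + (1/15) * (Q x)^2) x)
    (hQne : ∀ x ∈ s, Q x ≠ 0)
    (hW : DifferentiableOn ℂ W s)
    (hW2 : ∀ x ∈ s, (W x)^2 = -(3/5) * Q x)
    (hZ : ∀ x, Z x = 3 * R x / (2 * Q x) + (1/2) * W x)
    (hZb : ∀ x, Zb x = 3 * R x / (2 * Q x) - (1/2) * W x)
    (hp₂ : ∀ x, p₂ x = P x + Z x)
    (hq₂ : ∀ x, q₂ x = -(5/3) * (Zb x)^2)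
    (hr₂ : ∀ x, r₂ x = (5/9) * (Zb x)^2 * (2 * Z x - Zb x)) :
    ∀ x ∈ s,
      HasDerivAt p₂ ((1/6) * ((p₂ x)^2 - q₂ x)) x ∧
      HasDerivAt q₂ ((2/3) * (p₂ x * q₂ x - r₂ x)) x ∧
      HasDerivAt r₂ (p₂ x * r₂ x + (1/15) * (q₂ x)^2) x := by
  intro x hx
  have hsol : Chazy32.IsSolAt P Q R x := ⟨hP x hx, hQ x hx, hR x hx⟩
  have hW2x : ∀ᶠ y in 𝓝 x, W y ^ 2 = -(3/5) * Q y :=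
    eventually_of_mem (hs.mem_nhds hx) hW2
  have hsol₂ := ((hsol.isReducedSolAt (hQne x hx) (hW.differentiableAt (hs.mem_nhds hx))
    hW2x).symmetry).isSolAt
  obtain rfl : p₂ = fun y => P y + 3 * R y / (2 * Q y) + W y / 2 := by
    funext y; rw [hp₂, hZ]; ring
  obtain rfl : q₂ = fun y => -(5/3) * (3 * R y / (2 * Q y) - W y / 2) ^ 2 := by
    funext y; rw [hq₂, hZb]; ring
  obtain rfl : r₂ = fun y => -(10/9) * (-(3 * R y / (2 * Q y) / 2) - 3/4 * W y) *
      (3 * R y / (2 * Q y) - W y / 2) ^ 2 := by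
    funext y; rw [hr₂, hZ, hZb]; ring
  exact hsol₂
end

section
/- Let (P, Q, R) satisfy P' = (1/6)(P²−Q), Q' = (2/3)(PQ−R), R' = PR + (1/15)Q² with Q nonvanishing. Then the triple p₀ = P + R/Q, q₀ = (3/5)Q − 3R²/Q², r₀ = (9/5)R + 3R³/Q³ satisfies p₀' = (1/6)(p₀²−q₀), q₀' = (2/3)(p₀q₀−r₀), r₀' = p₀r₀ + (1/3)q₀², i.e. the first-order system associated to the generalised Chazy equation with parameter k = 3. -/
open Complex

/-!
Put `u = R / Q`. Whatever the coefficient `c` of `Q²` in `R'`, the system forces the Riccati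
equation `u' = P u / 3 + c Q + (2/3) u²`. The new triple is `p₀ = P + u`, `q₀ = (3/5) Q - 3 u²`,
`r₀ = (9/5) R + 3 u³`, so its derivatives follow from the sum and power rules, and for `c = 1/15`
they satisfy the `k = 3` system identically in `P, Q, R`.
-/

variable {𝕜 : Type*} [NontriviallyNormedField 𝕜]

/-- `c = 1/15` gives the system for `k = 3/2`, and `c = 1/3` the one for `k = 3`. -/
def SolvesChazySystemAt (c : 𝕜) (P Q R : 𝕜 → 𝕜) (x : 𝕜) : Prop :=
  HasDerivAt P ((1/6) * ((P x)^2 - Q x)) x ∧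
  HasDerivAt Q ((2/3) * (P x * Q x - R x)) x ∧
  HasDerivAt R (P x * R x + c * (Q x)^2) x

namespace SolvesChazySystemAt

variable [CharZero 𝕜] {c : 𝕜} {P Q R : 𝕜 → 𝕜} {x : 𝕜}

theorem hasDerivAt_div (h : SolvesChazySystemAt c P Q R x) (hQ : Q x ≠ 0) :
    HasDerivAt (fun y => R y / Q y)
      (P x * (R x / Q x) / 3 + c * Q x + (2/3) * (R x / Q x)^2) x := by
  refine (h.2.2.div h.2.1 hQ).congr_deriv ?_
  field_simp
  ring

theorem chazy3_of_chazy32 (h : SolvesChazySystemAt (1/15) P Q R x) (hQ : Q x ≠ 0) :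
    SolvesChazySystemAt (1/3) (fun y => P y + R y / Q y)
      (fun y => (3/5) * Q y - 3 * (R y)^2 / (Q y)^2)
      (fun y => (9/5) * R y + 3 * (R y)^3 / (Q y)^3) x := by
  have hu := h.hasDerivAt_div hQ
  obtain ⟨hP, hQ', hR⟩ := h
  have hq₀ : (fun y => (3/5) * Q y - 3 * (R y)^2 / (Q y)^2) =
      fun y => (3/5) * Q y - 3 * (R y / Q y)^2 := by
    simp only [div_pow, mul_div_assoc]
  have hr₀ : (fun y => (9/5) * R y + 3 * (R y)^3 / (Q y)^3) =
      fun y => (9/5) * R y + 3 * (R y / Q y)^3 := by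
    simp only [div_pow, mul_div_assoc]
  rw [SolvesChazySystemAt, hq₀, hr₀]
  refine ⟨?_, ?_, ?_⟩
  · refine (hP.add hu).congr_deriv ?_
    ring
  · refine ((hQ'.const_mul (3/5)).sub ((hu.pow 2).const_mul 3)).congr_deriv ?_
    simp only [Nat.cast_ofNat, Nat.reduceSub]
    field_simp
    ring
  · refine ((hR.const_mul (9/5)).add ((hu.pow 3).const_mul 3)).congr_deriv ?_
    simp only [Nat.cast_ofNat, Nat.reduceSub]
    field_simp
    ring

end SolvesChazySystemAt

theorem chazy32_to_chazy3_general (s : Set ℂ)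
    (P Q R p₀ q₀ r₀ : ℂ → ℂ)
    (hP : ∀ x ∈ s, HasDerivAt P ((1/6) * ((P x)^2 - Q x)) x)
    (hQ : ∀ x ∈ s, HasDerivAt Q ((2/3) * (P x * Q x - R x)) x)
    (hR : ∀ x ∈ s, HasDerivAt R (P x * R x + (1/15) * (Q x)^2) x)
    (hQne : ∀ x ∈ s, Q x ≠ 0)
    (hp₀ : ∀ x, p₀ x = P x + R x / Q x)
    (hq₀ : ∀ x, q₀ x = (3/5) * Q x - 3 * (R x)^2 / (Q x)^2)
    (hr₀ : ∀ x, r₀ x = (9/5) * R x + 3 * (R x)^3 / (Q x)^3) :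
    ∀ x ∈ s,
      HasDerivAt p₀ ((1/6) * ((p₀ x)^2 - q₀ x)) x ∧
      HasDerivAt q₀ ((2/3) * (p₀ x * q₀ x - r₀ x)) x ∧
      HasDerivAt r₀ (p₀ x * r₀ x + (1/3) * (q₀ x)^2) x := by
  obtain rfl : p₀ = _ := funext hp₀
  obtain rfl : q₀ = _ := funext hq₀
  obtain rfl : r₀ = _ := funext hr₀
  intro x hx
  exact SolvesChazySystemAt.chazy3_of_chazy32 ⟨hP x hx, hQ x hx, hR x hx⟩ (hQne x hx)

/-- Given `(P, Q, R)` satisfying the first-order system associated to the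
generalised Chazy equation with `k = 3/2` and `Q` nonvanishing, the triple
`p₀ = P + R/Q`, `q₀ = (3/5)Q - 3R²/Q²`, `r₀ = (9/5)R + 3R³/Q³` satisfies the
first-order system associated to the generalised Chazy equation with `k = 3`. -/
theorem chazy32_to_chazy3 (s : Set ℂ) (hs : IsOpen s)
    (P Q R p₀ q₀ r₀ : ℂ → ℂ)
    (hP : ∀ x ∈ s, HasDerivAt P ((1/6) * ((P x)^2 - Q x)) x)
    (hQ : ∀ x ∈ s, HasDerivAt Q ((2/3) * (P x * Q x - R x)) x)
    (hR : ∀ x ∈ s, HasDerivAt R (P x * R x + (1/15) * (Q x)^2) x)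
    (hQne : ∀ x ∈ s, Q x ≠ 0)
    (hp₀ : ∀ x, p₀ x = P x + R x / Q x)
    (hq₀ : ∀ x, q₀ x = (3/5) * Q x - 3 * (R x)^2 / (Q x)^2)
    (hr₀ : ∀ x, r₀ x = (9/5) * R x + 3 * (R x)^3 / (Q x)^3) :
    ∀ x ∈ s,
      HasDerivAt p₀ ((1/6) * ((p₀ x)^2 - q₀ x)) x ∧
      HasDerivAt q₀ ((2/3) * (p₀ x * q₀ x - r₀ x)) x ∧
      HasDerivAt r₀ (p₀ x * r₀ x + (1/3) * (q₀ x)^2) x :=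
  chazy32_to_chazy3_general s P Q R p₀ q₀ r₀ hP hQ hR hQne hp₀ hq₀ hr₀
end

section
/- Let q₀, r₀ be complex numbers and let z be a root of the cubic 16z³ − 24q₀z² + 9q₀²z − q₀³ − 3r₀² = 0 with 4z ≠ q₀. Define P = p₀ − r₀/(4z − q₀), Q = (5/3)z, R = (5/3)·r₀z/(4z − q₀). Then P + R/Q = p₀, (3/5)Q − 3R²/Q² = q₀, and (9/5)R + 3R³/Q³ = r₀ (assuming Q ≠ 0). -/
open Complex

/-! The cubic factors as `16z³ − 24q₀z² + 9q₀²z − q₀³ = (4z − q₀)²(z − q₀)`, so for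
`s = r₀/(4z − q₀)` it says exactly `3s² = z − q₀`. Since `R = Q s`, the three identities
become `P + s = p₀`, `z − 3s² = q₀` and `3zs + 3s³ = s(4z − q₀)`, each immediate from that
relation. -/

theorem three_mul_sq_div_eq_of_cubic {K : Type*} [Field K] {q r z : K}
    (hz : 16 * z ^ 3 - 24 * q * z ^ 2 + 9 * q ^ 2 * z - q ^ 3 - 3 * r ^ 2 = 0)
    (hne : 4 * z - q ≠ 0) :
    3 * (r / (4 * z - q)) ^ 2 = z - q := by
  have hfactor : 3 * r ^ 2 = (4 * z - q) ^ 2 * (z - q) := by linear_combination -hz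
  field_simp
  linear_combination hfactor

/-- If `z` is a root of `16z³ - 24q₀z² + 9q₀²z - q₀³ - 3r₀² = 0` with
`4z ≠ q₀` and `z ≠ 0`, then `P = p₀ - r₀/(4z - q₀)`, `Q = (5/3)z`,
`R = (5/3) r₀ z/(4z - q₀)` satisfy `P + R/Q = p₀`, `(3/5)Q - 3R²/Q² = q₀`,
and `(9/5)R + 3R³/Q³ = r₀`. -/
theorem chazy3_to_chazy32_inverse (p₀ q₀ r₀ z P Q R : ℂ)
    (hz : 16 * z^3 - 24 * q₀ * z^2 + 9 * q₀^2 * z - q₀^3 - 3 * r₀^2 = 0)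
    (hne : 4 * z - q₀ ≠ 0) (hz0 : z ≠ 0)
    (hP : P = p₀ - r₀ / (4 * z - q₀))
    (hQ : Q = (5/3) * z)
    (hR : R = (5/3) * (r₀ * z / (4 * z - q₀))) :
    P + R / Q = p₀ ∧ (3/5) * Q - 3 * R^2 / Q^2 = q₀ ∧
      (9/5) * R + 3 * R^3 / Q^3 = r₀ := by
  set s := r₀ / (4 * z - q₀) with hs
  have hs_sq : 3 * s ^ 2 = z - q₀ := three_mul_sq_div_eq_of_cubic hz hne
  have hr₀ : r₀ = s * (4 * z - q₀) := (div_mul_cancel₀ r₀ hne).symm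
  have hR_eq : R = (5/3) * z * s := by rw [hR, hs]; ring
  have hRQ : R / Q = s := by
    rw [hR_eq, hQ]
    field_simp
  refine ⟨by rw [hRQ, hP]; ring, ?_, ?_⟩
  · rw [show 3 * R ^ 2 / Q ^ 2 = 3 * (R / Q) ^ 2 by ring, hRQ, hQ]
    linear_combination -hs_sq
  · rw [show 3 * R ^ 3 / Q ^ 3 = 3 * (R / Q) ^ 3 by ring, hRQ, hR_eq]
    linear_combination s * hs_sq - hr₀
end
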